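/- arXiv:1111.1877 — 2 statements merged into one kernel-verified Lean document; each statement's English description precedes it below -/
import Mathlib

section
/- Let B be a complex symmetric n×n matrix with positive definite imaginary part, and let J(B) be the associated Ω-compatible complex structure. Then ker P_{J(B)} = L_B, i.e. for z ∈ ℂⁿ×ℂⁿ one has Re z + J(B) Im z = 0 if and only if z = (Bq,q) for some q ∈ ℂⁿ. Equivalently, the block identity [[Re B, −Im B],[I, 0]] + J(B)·[[Im B, Re B],[0, I]] = 0 holds. -/
open Matrix

noncomputable section

/-- The standard symplectic matrix `Ω = [[0, −I],[I, 0]]` on `ℝ²ⁿ`. -/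
def Omg (n : ℕ) : Matrix (Fin n ⊕ Fin n) (Fin n ⊕ Fin n) ℝ :=
  fromBlocks 0 (-1) 1 0

/-- Componentwise real part of a complex matrix. -/
def matRe {m k : Type*} (A : Matrix m k ℂ) : Matrix m k ℝ := A.map Complex.re

/-- Componentwise imaginary part of a complex matrix. -/
def matIm {m k : Type*} (A : Matrix m k ℂ) : Matrix m k ℝ := A.map Complex.im

/-- Componentwise real part of a complex vector. -/
def vecRe {m : Type*} (z : m → ℂ) : m → ℝ := fun i => (z i).re

/-- Componentwise imaginary part of a complex vector. -/
def vecIm {m : Type*} (z : m → ℂ) : m → ℝ := fun i => (z i).im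

/-- The `Ω`-compatible complex structure `J(B)` associated with a complex symmetric
matrix `B` with `Im B > 0`, in `n×n` block form. -/
def JB {n : ℕ} (B : Matrix (Fin n) (Fin n) ℂ) :
    Matrix (Fin n ⊕ Fin n) (Fin n ⊕ Fin n) ℝ :=
  fromBlocks (-(matRe B) * (matIm B)⁻¹) (matIm B + matRe B * (matIm B)⁻¹ * matRe B)
    (-(matIm B)⁻¹) ((matIm B)⁻¹ * matRe B)

/-- The projection `P_J(z) = Re z + J Im z` from `ℂ²ⁿ` to `ℝ²ⁿ`. -/
def PJ {n : ℕ} (J : Matrix (Fin n ⊕ Fin n) (Fin n ⊕ Fin n) ℝ)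
    (z : Fin n ⊕ Fin n → ℂ) : Fin n ⊕ Fin n → ℝ :=
  vecRe z + J *ᵥ vecIm z

/-! Re and Im of `(Bq, q)` are the images of `(Re q, Im q)` under `[[Re B, −Im B],[I, 0]]` and
`[[Im B, Re B],[0, I]]`, so the block identity, a direct computation with `(Im B)⁻¹`, puts `L_B`
inside the kernel. Conversely, subtracting `(Bq, q)` with `q` the second component of `z` leaves
`(w, 0)`, and `P_J(w, 0) = (Re w − Re B (Im B)⁻¹ Im w, −(Im B)⁻¹ Im w)` vanishes only for `w = 0`. -/

lemma vecRe_mulVec {m k : Type*} [Fintype k] (B : Matrix m k ℂ) (q : k → ℂ) :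
    vecRe (B *ᵥ q) = matRe B *ᵥ vecRe q - matIm B *ᵥ vecIm q := by
  funext i
  simp [vecRe, vecIm, matRe, matIm, mulVec, dotProduct, Complex.mul_re, Finset.sum_sub_distrib]

lemma vecIm_mulVec {m k : Type*} [Fintype k] (B : Matrix m k ℂ) (q : k → ℂ) :
    vecIm (B *ᵥ q) = matIm B *ᵥ vecRe q + matRe B *ᵥ vecIm q := by
  funext i
  simp [vecRe, vecIm, matRe, matIm, mulVec, dotProduct, Complex.mul_im, Finset.sum_add_distrib,
    add_comm]

lemma vecRe_sumElim {m k : Type*} (a : m → ℂ) (b : k → ℂ) :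
    vecRe (Sum.elim a b) = Sum.elim (vecRe a) (vecRe b) :=
  Sum.comp_elim Complex.re a b

lemma vecIm_sumElim {m k : Type*} (a : m → ℂ) (b : k → ℂ) :
    vecIm (Sum.elim a b) = Sum.elim (vecIm a) (vecIm b) :=
  Sum.comp_elim Complex.im a b

lemma PJ_add {n : ℕ} (J : Matrix (Fin n ⊕ Fin n) (Fin n ⊕ Fin n) ℝ) (z w : Fin n ⊕ Fin n → ℂ) :
    PJ J (z + w) = PJ J z + PJ J w := by
  have hRe : vecRe (z + w) = vecRe z + vecRe w := rfl
  have hIm : vecIm (z + w) = vecIm z + vecIm w := rfl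
  rw [PJ, PJ, PJ, hRe, hIm, mulVec_add]
  abel

section

variable {n : ℕ} {B : Matrix (Fin n) (Fin n) ℂ}

lemma fromBlocks_add_JB_mul_eq_zero (hB : IsUnit (matIm B).det) :
    fromBlocks (matRe B) (-(matIm B)) 1 0 + JB B * fromBlocks (matIm B) (matRe B) 0 1 = 0 := by
  have hinv_mul : (matIm B)⁻¹ * matIm B = 1 := nonsing_inv_mul _ hB
  rw [JB, fromBlocks_multiply, fromBlocks_add, ← fromBlocks_zero]
  congr 1 <;> simp [Matrix.mul_assoc, hinv_mul]

lemma PJ_JB_sumElim_mulVec (hB : IsUnit (matIm B).det) (q : Fin n → ℂ) :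
    PJ (JB B) (Sum.elim (B *ᵥ q) q) = 0 := by
  have hRe : vecRe (Sum.elim (B *ᵥ q) q) =
      fromBlocks (matRe B) (-(matIm B)) 1 0 *ᵥ Sum.elim (vecRe q) (vecIm q) := by
    simp [vecRe_sumElim, fromBlocks_mulVec, vecRe_mulVec, sub_eq_add_neg, neg_mulVec]
  have hIm : vecIm (Sum.elim (B *ᵥ q) q) =
      fromBlocks (matIm B) (matRe B) 0 1 *ᵥ Sum.elim (vecRe q) (vecIm q) := by
    simp [vecIm_sumElim, fromBlocks_mulVec, vecIm_mulVec]
  rw [PJ, hRe, hIm, mulVec_mulVec, ← add_mulVec, fromBlocks_add_JB_mul_eq_zero hB, zero_mulVec]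

lemma eq_zero_of_PJ_JB_sumElim_zero (hB : IsUnit (matIm B).det) {w : Fin n → ℂ}
    (hw : PJ (JB B) (Sum.elim w 0) = 0) : w = 0 := by
  have hvec : PJ (JB B) (Sum.elim w 0) =
      Sum.elim (vecRe w + (-matRe B * (matIm B)⁻¹) *ᵥ vecIm w) (-(matIm B)⁻¹ *ᵥ vecIm w) := by
    have hRe0 : vecRe (0 : Fin n → ℂ) = 0 := funext fun _ => Complex.zero_re
    have hIm0 : vecIm (0 : Fin n → ℂ) = 0 := funext fun _ => Complex.zero_im
    simp [PJ, JB, vecRe_sumElim, vecIm_sumElim, hRe0, hIm0, fromBlocks_mulVec, ← Sum.elim_add_add]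
  rw [hvec, ← Sum.elim_zero_zero, Sum.elim_eq_iff] at hw
  have hIm : vecIm w = 0 := by
    have := congrArg (-matIm B *ᵥ ·) hw.2
    simpa [mulVec_mulVec, mul_nonsing_inv _ hB] using this
  have hRe : vecRe w = 0 := by simpa [hIm] using hw.1
  funext i
  exact Complex.ext (congrFun hRe i) (congrFun hIm i)

end

theorem statement7_general (n : ℕ) (B : Matrix (Fin n) (Fin n) ℂ)
    (hBim : (matIm B).PosDef) :
    (∀ z : Fin n ⊕ Fin n → ℂ,
      PJ (JB B) z = 0 ↔ ∃ q : Fin n → ℂ, z = Sum.elim (B *ᵥ q) q) ∧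
    fromBlocks (matRe B) (-(matIm B)) 1 0 +
      JB B * fromBlocks (matIm B) (matRe B) 0 1 = 0 := by
  have hB : IsUnit (matIm B).det := hBim.det_pos.ne'.isUnit
  refine ⟨fun z => ⟨fun hz => ?_, ?_⟩, fromBlocks_add_JB_mul_eq_zero hB⟩
  · set q : Fin n → ℂ := z ∘ Sum.inr
    set w : Fin n → ℂ := z ∘ Sum.inl - B *ᵥ q
    have hsplit : z = Sum.elim (B *ᵥ q) q + Sum.elim w 0 := by
      funext i; cases i <;> simp [q, w]
    rw [hsplit, PJ_add, PJ_JB_sumElim_mulVec hB, zero_add] at hz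
    refine ⟨q, ?_⟩
    rw [hsplit, eq_zero_of_PJ_JB_sumElim_zero hB hz, Sum.elim_zero_zero, add_zero]
  · rintro ⟨q, rfl⟩
    exact PJ_JB_sumElim_mulVec hB q

/-- Let `B` be complex symmetric with `Im B` positive definite and
`J(B)` the associated `Ω`-compatible complex structure. Then `ker P_{J(B)} = L_B`:
`Re z + J(B) Im z = 0` iff `z = (Bq,q)` for some `q ∈ ℂⁿ`. Equivalently, the block
identity `[[Re B, −Im B],[I,0]] + J(B)·[[Im B, Re B],[0,I]] = 0` holds. -/
theorem statement7 (n : ℕ) (B : Matrix (Fin n) (Fin n) ℂ)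
    (hBsymm : Bᵀ = B) (hBim : (matIm B).PosDef) :
    (∀ z : Fin n ⊕ Fin n → ℂ,
      PJ (JB B) z = 0 ↔ ∃ q : Fin n → ℂ, z = Sum.elim (B *ᵥ q) q) ∧
    fromBlocks (matRe B) (-(matIm B)) 1 0 +
      JB B * fromBlocks (matIm B) (matRe B) 0 1 = 0 :=
  statement7_general n B hBim
end
end

section
/- Let H : I → M_{2n}(ℂ) be continuous and symmetric-valued and let S : I → M_{2n}(ℂ) solve Ṡ = ΩHS with S(0) = I. Define the real 4n×4n matrix function Φ(t) := [[Ω Re S(t) Ωᵀ, Ω Im S(t)],[−Im S(t) Ωᵀ, Re S(t)]] (2n×2n block form). Then Φ(0) = I and Φ satisfies the linear Hamiltonian equation Φ̇ = [[0, −I],[I, 0]] · [[−Ωᵀ(Im H)Ω, Ω(Re H)],[−(Re H)Ω, Im H]] · Φ on the doubled phase space ℝ²ⁿ×ℝ²ⁿ. -/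
open Matrix

noncomputable section

/-- The complexification of `Ω`. -/
def OmgC (n : ℕ) : Matrix (Fin n ⊕ Fin n) (Fin n ⊕ Fin n) ℂ :=
  (Omg n).map Complex.ofReal

/-- The standard symplectic-type matrix `[[0,−I],[I,0]]` on the doubled phase space
`ℝ²ⁿ×ℝ²ⁿ`. -/
def bigOm (n : ℕ) :
    Matrix ((Fin n ⊕ Fin n) ⊕ (Fin n ⊕ Fin n)) ((Fin n ⊕ Fin n) ⊕ (Fin n ⊕ Fin n)) ℝ :=
  fromBlocks 0 (-1) 1 0

/-!
Write `Ψ(M)` for the block matrix defining `Φ`, so `Φ(t) = Ψ(S(t))`. With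
`ρ(A + iB) = [[A, B], [-B, A]]` the realification, which is multiplicative, and the orthogonal
matrix `D = diag(Ω, 1)`, one has `Ψ(M) = D ρ(M) Dᵀ`; hence `Ψ` is `ℝ`-linear and multiplicative.
So `Φ(0) = Ψ(1) = 1` and `Φ̇ = Ψ(ΩHS) = Ψ(ΩH) Φ`, and a block computation with `Ω² = -1`
identifies `Ψ(ΩH)` with the Hamiltonian matrix of the equation.
-/

lemma Omg_transpose (n : ℕ) : (Omg n)ᵀ = -Omg n := by
  simp [Omg, fromBlocks_transpose, fromBlocks_neg]

lemma Omg_mul_Omg (n : ℕ) : Omg n * Omg n = -1 := by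
  simp [Omg, fromBlocks_multiply, ← fromBlocks_one, fromBlocks_neg]

lemma Omg_mul_Omg_transpose (n : ℕ) : Omg n * (Omg n)ᵀ = 1 := by
  rw [Omg_transpose, Matrix.mul_neg, Omg_mul_Omg, neg_neg]

lemma Omg_transpose_mul_Omg (n : ℕ) : (Omg n)ᵀ * Omg n = 1 := by
  rw [Omg_transpose, Matrix.neg_mul, Omg_mul_Omg, neg_neg]

section ReIm

variable {l m k : Type*}

lemma matRe_one [Fintype m] [DecidableEq m] : matRe (1 : Matrix m m ℂ) = 1 := by
  ext i j; by_cases h : i = j <;> simp [matRe, Matrix.one_apply, h]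

lemma matIm_one [Fintype m] [DecidableEq m] : matIm (1 : Matrix m m ℂ) = 0 := by
  ext i j; by_cases h : i = j <;> simp [matIm, h]

lemma matRe_mul [Fintype m] (A : Matrix l m ℂ) (B : Matrix m k ℂ) :
    matRe (A * B) = matRe A * matRe B - matIm A * matIm B := by
  ext i j
  simp [matRe, matIm, Matrix.mul_apply, Complex.mul_re, Finset.sum_sub_distrib]

lemma matIm_mul [Fintype m] (A : Matrix l m ℂ) (B : Matrix m k ℂ) :
    matIm (A * B) = matRe A * matIm B + matIm A * matRe B := by
  ext i j
  simp [matRe, matIm, Matrix.mul_apply, Complex.mul_im, Finset.sum_add_distrib]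

lemma matRe_map_ofReal (A : Matrix l m ℝ) : matRe (A.map Complex.ofReal) = A := by
  ext i j; simp [matRe]

lemma matIm_map_ofReal (A : Matrix l m ℝ) : matIm (A.map Complex.ofReal) = 0 := by
  ext i j; simp [matIm]

lemma matRe_add (A B : Matrix l m ℂ) : matRe (A + B) = matRe A + matRe B := by
  ext i j; simp [matRe]

lemma matIm_add (A B : Matrix l m ℂ) : matIm (A + B) = matIm A + matIm B := by
  ext i j; simp [matIm]

lemma matRe_smul (c : ℝ) (A : Matrix l m ℂ) : matRe (c • A) = c • matRe A := by
  ext i j; simp [matRe]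

lemma matIm_smul (c : ℝ) (A : Matrix l m ℂ) : matIm (c • A) = c • matIm A := by
  ext i j; simp [matIm]

def realify (A : Matrix l m ℂ) : Matrix (l ⊕ l) (m ⊕ m) ℝ :=
  fromBlocks (matRe A) (matIm A) (-matIm A) (matRe A)

lemma realify_one [Fintype m] [DecidableEq m] : realify (1 : Matrix m m ℂ) = 1 := by
  rw [realify, matRe_one, matIm_one, neg_zero, fromBlocks_one]

lemma realify_mul [Fintype m] (A : Matrix l m ℂ) (B : Matrix m k ℂ) :
    realify (A * B) = realify A * realify B := by
  simp only [realify, fromBlocks_multiply, matRe_mul, matIm_mul, Matrix.neg_mul,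
    Matrix.mul_neg]
  congr 1 <;> abel

end ReIm

lemma HasDerivWithinAt.matrix_linearMap_apply {m k m' k' E F : Type*} [Fintype m] [Fintype k]
    [Fintype m'] [Fintype k'] [NormedAddCommGroup E] [NormedSpace ℝ E] [FiniteDimensional ℝ E]
    [NormedAddCommGroup F] [NormedSpace ℝ F]
    (T : Matrix m k E →ₗ[ℝ] Matrix m' k' F) {f : ℝ → Matrix m k E} {f' : Matrix m k E}
    {s : Set ℝ} {t : ℝ} (hf : ∀ a b, HasDerivWithinAt (fun x => f x a b) (f' a b) s t)
    (i : m') (j : k') :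
    HasDerivWithinAt (fun x => T (f x) i j) (T f' i j) s t := by
  have hpi : HasDerivWithinAt (fun x => (f x : m → k → E)) (f' : m → k → E) s t :=
    hasDerivWithinAt_pi.2 fun a => hasDerivWithinAt_pi.2 (hf a)
  let T' : (m → k → E) →L[ℝ] (m' → k' → F) := LinearMap.toContinuousLinearMap T
  have hT := T'.hasFDerivAt.comp_hasDerivWithinAt t hpi
  exact hasDerivWithinAt_pi.1 (hasDerivWithinAt_pi.1 hT i) j

section Doubling

variable (n : ℕ)

def doubling :
    Matrix (Fin n ⊕ Fin n) (Fin n ⊕ Fin n) ℂ →ₗ[ℝ]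
      Matrix ((Fin n ⊕ Fin n) ⊕ (Fin n ⊕ Fin n)) ((Fin n ⊕ Fin n) ⊕ (Fin n ⊕ Fin n)) ℝ where
  toFun M := fromBlocks (Omg n * matRe M * (Omg n)ᵀ) (Omg n * matIm M)
    (-(matIm M) * (Omg n)ᵀ) (matRe M)
  map_add' A B := by
    simp only [matRe_add, matIm_add, Matrix.mul_add, Matrix.add_mul, neg_add, fromBlocks_add]
  map_smul' c A := by
    simp only [matRe_smul, matIm_smul, Matrix.mul_smul, Matrix.smul_mul, Matrix.neg_mul, smul_neg,
      fromBlocks_smul, RingHom.id_apply]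

def doublingConj :
    Matrix ((Fin n ⊕ Fin n) ⊕ (Fin n ⊕ Fin n)) ((Fin n ⊕ Fin n) ⊕ (Fin n ⊕ Fin n)) ℝ :=
  fromBlocks (Omg n) 0 0 1

variable {n}

lemma doubling_eq_conj_realify (M : Matrix (Fin n ⊕ Fin n) (Fin n ⊕ Fin n) ℂ) :
    doubling n M = doublingConj n * realify M * (doublingConj n)ᵀ := by
  simp [doubling, doublingConj, realify, fromBlocks_multiply, fromBlocks_transpose,
    Matrix.mul_assoc]

lemma doublingConj_mul_transpose : doublingConj n * (doublingConj n)ᵀ = 1 := by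
  simp [doublingConj, fromBlocks_transpose, fromBlocks_multiply, Omg_mul_Omg_transpose]

lemma doublingConj_transpose_mul : (doublingConj n)ᵀ * doublingConj n = 1 := by
  simp [doublingConj, fromBlocks_transpose, fromBlocks_multiply, Omg_transpose_mul_Omg]

lemma doubling_one : doubling n 1 = 1 := by
  rw [doubling_eq_conj_realify, realify_one, Matrix.mul_one, doublingConj_mul_transpose]

lemma doubling_mul (A B : Matrix (Fin n ⊕ Fin n) (Fin n ⊕ Fin n) ℂ) :
    doubling n (A * B) = doubling n A * doubling n B := by
  simp only [doubling_eq_conj_realify, realify_mul, Matrix.mul_assoc,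
    ← Matrix.mul_assoc (doublingConj n)ᵀ (doublingConj n), doublingConj_transpose_mul,
    Matrix.one_mul]

lemma doubling_OmgC_mul (M : Matrix (Fin n ⊕ Fin n) (Fin n ⊕ Fin n) ℂ) :
    doubling n (OmgC n * M) =
      bigOm n * fromBlocks (-((Omg n)ᵀ * matIm M * Omg n)) (Omg n * matRe M)
        (-(matRe M * Omg n)) (matIm M) := by
  have hJJ (X : Matrix (Fin n ⊕ Fin n) (Fin n ⊕ Fin n) ℝ) : Omg n * (Omg n * X) = -X := by
    rw [← Matrix.mul_assoc, Omg_mul_Omg, Matrix.neg_mul, Matrix.one_mul]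
  simp only [doubling, LinearMap.coe_mk, AddHom.coe_mk, OmgC, matRe_mul, matIm_mul,
    matRe_map_ofReal, matIm_map_ofReal, bigOm, fromBlocks_multiply, Omg_transpose]
  congr 1 <;> simp only [Matrix.zero_mul, Matrix.one_mul, Matrix.neg_mul, Matrix.mul_neg,
    sub_zero, add_zero, zero_add, neg_zero, Matrix.mul_assoc, hJJ, neg_neg]

end Doubling

end

theorem statement16_general (n : ℕ) (I : Set ℝ)
    (H S : ℝ → Matrix (Fin n ⊕ Fin n) (Fin n ⊕ Fin n) ℂ)
    (hS : ∀ t ∈ I, ∀ i j,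
      HasDerivWithinAt (fun s => S s i j) ((OmgC n * H t * S t) i j) I t)
    (hS0 : S 0 = 1)
    (Φ : ℝ →
      Matrix ((Fin n ⊕ Fin n) ⊕ (Fin n ⊕ Fin n)) ((Fin n ⊕ Fin n) ⊕ (Fin n ⊕ Fin n)) ℝ)
    (hΦ : ∀ t, Φ t = fromBlocks (Omg n * matRe (S t) * (Omg n)ᵀ) (Omg n * matIm (S t))
      (-(matIm (S t)) * (Omg n)ᵀ) (matRe (S t))) :
    Φ 0 = 1 ∧
    ∀ t ∈ I, ∀ i j,
      HasDerivWithinAt (fun s => Φ s i j)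
        ((bigOm n *
          fromBlocks (-((Omg n)ᵀ * matIm (H t) * Omg n)) (Omg n * matRe (H t))
            (-(matRe (H t) * Omg n)) (matIm (H t)) * Φ t) i j)
        I t := by
  have hΦS : ∀ t, Φ t = doubling n (S t) := hΦ
  refine ⟨by rw [hΦS, hS0, doubling_one], fun t ht i j => ?_⟩
  simp only [hΦS, ← doubling_OmgC_mul, ← doubling_mul]
  exact HasDerivWithinAt.matrix_linearMap_apply (doubling n) (hS t ht) i j

/-- Let `H` be continuous and symmetric-valued on an interval `I`
containing `0` and `S` solve `Ṡ = ΩHS`, `S(0) = I`. Define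
`Φ(t) := [[Ω Re S(t) Ωᵀ, Ω Im S(t)],[−Im S(t) Ωᵀ, Re S(t)]]`. Then `Φ(0) = I` and `Φ`
satisfies the linear Hamiltonian equation
`Φ̇ = [[0,−I],[I,0]]·[[−Ωᵀ(Im H)Ω, Ω Re H],[−(Re H)Ω, Im H]]·Φ` on the doubled phase
space. -/
theorem statement16 (n : ℕ) (I : Set ℝ) (hI : I.OrdConnected) (h0I : (0 : ℝ) ∈ I)
    (H S : ℝ → Matrix (Fin n ⊕ Fin n) (Fin n ⊕ Fin n) ℂ)
    (hHcont : ∀ i j, ContinuousOn (fun t => H t i j) I)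
    (hHsymm : ∀ t ∈ I, (H t)ᵀ = H t)
    (hS : ∀ t ∈ I, ∀ i j,
      HasDerivWithinAt (fun s => S s i j) ((OmgC n * H t * S t) i j) I t)
    (hS0 : S 0 = 1)
    (Φ : ℝ →
      Matrix ((Fin n ⊕ Fin n) ⊕ (Fin n ⊕ Fin n)) ((Fin n ⊕ Fin n) ⊕ (Fin n ⊕ Fin n)) ℝ)
    (hΦ : ∀ t, Φ t = fromBlocks (Omg n * matRe (S t) * (Omg n)ᵀ) (Omg n * matIm (S t))
      (-(matIm (S t)) * (Omg n)ᵀ) (matRe (S t))) :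
    Φ 0 = 1 ∧
    ∀ t ∈ I, ∀ i j,
      HasDerivWithinAt (fun s => Φ s i j)
        ((bigOm n *
          fromBlocks (-((Omg n)ᵀ * matIm (H t) * Omg n)) (Omg n * matRe (H t))
            (-(matRe (H t) * Omg n)) (matIm (H t)) * Φ t) i j)
        I t :=
  statement16_general n I H S hS hS0 Φ hΦ
end
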